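/- If ξ ∈ X and ξ < Θ_X(ε_{Ω+1}), then there exists ζ < ε_{Ω+1} such that Θ_X(ζ) = ξ. -/

import Mathlib

open Ordinal Set

noncomputable section
open scoped Classical

/-- `Ω`, the first uncountable ordinal. -/
def OmegaO : Ordinal := (Cardinal.aleph 1).ord

/-- `ε_{Ω+1}`, the least `ε > Ω` with `ω ^ ε = ε`. -/
def epsOmega : Ordinal := nfp (fun a => Ordinal.omega0 ^ a) (OmegaO + 1)

lemma omega0_le_OmegaO : Ordinal.omega0 ≤ OmegaO := by
  rw [OmegaO, ← Cardinal.ord_aleph0]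
  exact Cardinal.ord_le_ord.2 (Cardinal.aleph0_le_aleph 1)

lemma one_lt_OmegaO : 1 < OmegaO :=
  lt_of_lt_of_le Ordinal.one_lt_omega0 omega0_le_OmegaO

lemma OmegaO_pos : 0 < OmegaO := lt_trans zero_lt_one one_lt_OmegaO

/-- `ξ*`, the maximal coefficient in the `Ω`-normal form of `ξ`. -/
def star (ξ : Ordinal) : Ordinal :=
  if h0 : ξ = 0 then 0
  else if hl : log OmegaO ξ < ξ then
    max (max (star (log OmegaO ξ)) (star (ξ % OmegaO ^ log OmegaO ξ)))
      (ξ / OmegaO ^ log OmegaO ξ)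
  else 0
termination_by ξ
decreasing_by
  · exact hl
  · exact mod_opow_log_lt_self _ h0

/-- The generalized fundamental sequence `ξ[θ]`. -/
def fs (ξ θ : Ordinal) : Ordinal :=
  if h0 : ξ ≤ 1 then 0
  else if hmod : ξ % OmegaO ^ log OmegaO ξ ≠ 0 then
    OmegaO ^ log OmegaO ξ * (ξ / OmegaO ^ log OmegaO ξ) + fs (ξ % OmegaO ^ log OmegaO ξ) θ
  else if Order.IsSuccLimit (ξ / OmegaO ^ log OmegaO ξ) then OmegaO ^ log OmegaO ξ * θ
  else if hβ : ξ / OmegaO ^ log OmegaO ξ = 1 then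
    (if hlog : Order.IsSuccLimit (log OmegaO ξ) then
       (if hll : log OmegaO ξ < ξ then OmegaO ^ fs (log OmegaO ξ) θ else 0)
     else OmegaO ^ Ordinal.pred (log OmegaO ξ) * θ)
  else
    OmegaO ^ log OmegaO ξ * Ordinal.pred (ξ / OmegaO ^ log OmegaO ξ) + fs (OmegaO ^ log OmegaO ξ) θ
termination_by ξ
decreasing_by
  · exact mod_opow_log_lt_self _ (by intro h; exact h0 (by simp [h]))
  · exact hll
  · -- `Ω ^ log Ω ξ < ξ`
    have hξ0 : ξ ≠ 0 := by intro h; exact h0 (by simp [h])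
    have hle : OmegaO ^ log OmegaO ξ ≤ ξ := opow_log_le_self _ hξ0
    have hpos : 0 < OmegaO ^ log OmegaO ξ :=
      opow_pos _ OmegaO_pos
    have hβ0 : 0 < ξ / OmegaO ^ log OmegaO ξ :=
      Ordinal.div_pos (by positivity) |>.2 hle
    have hβ1 : 1 < ξ / OmegaO ^ log OmegaO ξ :=
      lt_of_le_of_ne (Order.one_le_iff_ne_zero.2 hβ0.ne') (Ne.symm hβ)
    calc OmegaO ^ log OmegaO ξ = OmegaO ^ log OmegaO ξ * 1 := (mul_one _).symm
      _ < OmegaO ^ log OmegaO ξ * (ξ / OmegaO ^ log OmegaO ξ) := by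
          exact mul_lt_mul_of_pos_left hβ1 hpos
      _ ≤ ξ := Ordinal.mul_div_le _ _

/-- The terminal part `τ(ξ)`. -/
def tau (ξ : Ordinal) : Ordinal :=
  if h0 : ξ = 0 then 0
  else if hmod : ξ % OmegaO ^ log OmegaO ξ ≠ 0 then tau (ξ % OmegaO ^ log OmegaO ξ)
  else if Order.IsSuccLimit (ξ / OmegaO ^ log OmegaO ξ) then ξ / OmegaO ^ log OmegaO ξ
  else if log OmegaO ξ = 0 then 1
  else if hlog : Order.IsSuccLimit (log OmegaO ξ) then
    (if hll : log OmegaO ξ < ξ then tau (log OmegaO ξ) else 0)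
  else OmegaO
termination_by ξ
decreasing_by
  · exact mod_opow_log_lt_self _ h0
  · exact hll

/-- The collapsing function `Θ_X`. -/
def ThetaF (X : Set Ordinal) (ξ : Ordinal) : Ordinal :=
  sInf {θ | θ ∈ X ∧ star ξ < θ ∧ ∀ ζ, ζ < ξ → star ζ < θ → ThetaF X ζ < θ}
termination_by ξ
decreasing_by exact by assumption

/-- `Ω_n`: the tower `Ω_0 = 1`, `Ω_{n+1} = Ω ^ Ω_n`. -/
def OmegaTow : ℕ → Ordinal
  | 0 => 1
  | n + 1 => OmegaO ^ OmegaTow n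

/-- `Θ_X(ε_{Ω+1}) = sup_n Θ_X(Ω_n)`. -/
def ThetaEps (X : Set Ordinal) : Ordinal := ⨆ n : ℕ, ThetaF X (OmegaTow n)

/-- `ε̂_{Ω+1}`. -/
def hatEps (X : Set Ordinal) : Set Ordinal :=
  {ξ | ξ < epsOmega ∧ star ξ < ThetaEps X}

/-- `X` is a club in `Ω`. -/
def IsClubBelowOmega (X : Set Ordinal) : Prop :=
  (∀ x ∈ X, x < OmegaO) ∧
  (∀ a, a < OmegaO → ∃ x ∈ X, a < x) ∧
  (∀ S : Set Ordinal, S ⊆ X → S.Nonempty → sSup S < OmegaO → sSup S ∈ X)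

/-- The set of limit points of `X` (below `Ω`). -/
def limitPtsOf (X : Set Ordinal) : Set Ordinal :=
  {x | 0 < x ∧ ∀ y, y < x → ∃ z ∈ X, y < z ∧ z < x}

/-- `FIX(X)`. -/
def FIXs (X : Set Ordinal) : Set Ordinal :=
  {ξ | ξ < epsOmega ∧ star (fs ξ 1) < star ξ ∧ star ξ = tau ξ ∧
    ∃ γ, ξ < γ ∧ γ < epsOmega ∧ star ξ = ThetaF X γ}

/-- `JUMP(X)`. -/
def JUMPs (X : Set Ordinal) : Set Ordinal :=
  {0} ∪ {ξ | ∃ ζ, ξ = ζ + 1} ∪ FIXs X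

/-- `Θ*`. -/
def ThetaStarF (X : Set Ordinal) (ξ : Ordinal) : Ordinal :=
  if ∃ ζ, ξ = ζ + 1 then ThetaF X (Ordinal.pred ξ)
  else if ξ ∈ FIXs X then tau ξ
  else 0

/-- `ξ̌`. -/
def checkF (X : Set Ordinal) (ξ : Ordinal) : Ordinal :=
  if 0 < ThetaStarF X ξ then OmegaO * (ξ / OmegaO) else ξ

/-- `ℙ`, the club of countable additively indecomposable ordinals. -/
def PP : Set Ordinal := {x | x < OmegaO ∧ ∃ a, x = Ordinal.omega0 ^ a}

/-- `1 + Ord`, the club of nonzero countable ordinals. -/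
def oneOrdS : Set Ordinal := {x | 0 < x ∧ x < OmegaO}

/-- `Θ^{(i)}(ξ)`. -/
def ThetaIter (X : Set Ordinal) (ξ : Ordinal) : ℕ → Ordinal
  | 0 => ThetaStarF X ξ
  | n + 1 => ThetaF X (fs (checkF X ξ) (ThetaIter X ξ n))

/-- A Buchholz system of fundamental sequences for `Θ_X`. -/
def IsBuchholz (X : Set Ordinal) (B : Ordinal → ℕ → Ordinal) : Prop :=
  (∀ n, B 0 n = 0) ∧
  (∀ α ξ n, ξ ∈ hatEps X → OmegaO ≤ ξ → tau ξ < OmegaO → ξ = fs α (tau ξ) →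
    B ξ n = fs α (B (tau ξ) n)) ∧
  (∀ ξ n, ξ ∈ hatEps X → 0 < tau (checkF X ξ) → tau (checkF X ξ) < OmegaO →
    B (ThetaF X ξ) n = ThetaF X (B (checkF X ξ) n + ThetaStarF X ξ)) ∧
  (∀ ξ n, ξ ∈ hatEps X → tau (checkF X ξ) = OmegaO →
    B (ThetaF X ξ) n = ThetaIter X ξ n)

/-- The additional clause for the `σ = Θ_{1+Ord}` Buchholz system. -/
def SigmaExtra (B : Ordinal → ℕ → Ordinal) : Prop :=
  ∀ β n, β < OmegaO → B (ThetaF oneOrdS β) n = β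

/-- The additional clauses for the `ϑ = Θ_ℙ` Buchholz system. -/
def VarthetaExtra (B : Ordinal → ℕ → Ordinal) : Prop :=
  (∀ α β n, 0 < β → (∀ α' < α, α' + β < α + β) → B (α + β) n = α + B β n) ∧
  (∀ β n, β < OmegaO → β ∈ JUMPs PP → B (ThetaF PP β) n = ThetaStarF PP β * n)

/-!
Pick `γ` with `γ* < ξ ≤ Θ_X(γ)`: `γ = 0` if `ξ ≤ Θ_X(0)`, and otherwise `γ = Ω_n` for an `n` with
`ξ < Θ_X(Ω_n)`, which qualifies because `Ω_n* = 1 < Θ_X(0) < ξ`. For the least such `γ`, every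
`ζ < γ` with `ζ* < ξ` has `Θ_X(ζ) < ξ`, so `ξ` is among the candidates whose least element is
`Θ_X(γ)`; hence `Θ_X(γ) = ξ`.
-/

section Epsilon

variable {ε : Ordinal}

theorem isPrincipal_mul_of_omega0_opow_eq (hε : ω ^ ε = ε) : IsPrincipal (· * ·) ε := by
  simpa only [hε] using isPrincipal_mul_omega0_opow_opow ε

theorem opow_lt_of_omega0_opow_eq (hε : ω ^ ε = ε) {a b : Ordinal} (ha : a < ε) (hb : b < ε) :
    a ^ b < ε :=
  calc a ^ b ≤ (ω ^ a) ^ b := opow_le_opow_left b (right_le_opow a one_lt_omega0)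
    _ = ω ^ (a * b) := (opow_mul ω a b).symm
    _ < ω ^ ε :=
      (opow_lt_opow_iff_right one_lt_omega0).2 (isPrincipal_mul_of_omega0_opow_eq hε ha hb)
    _ = ε := hε

end Epsilon

theorem omega0_opow_epsOmega : ω ^ epsOmega = epsOmega :=
  nfp_fp (isNormal_opow one_lt_omega0) _

theorem OmegaO_lt_epsOmega : OmegaO < epsOmega :=
  (lt_add_one OmegaO).trans_le (le_nfp _ _)

theorem OmegaTow_lt_epsOmega : ∀ n, OmegaTow n < epsOmega
  | 0 => one_lt_OmegaO.trans OmegaO_lt_epsOmega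
  | n + 1 =>
    opow_lt_of_omega0_opow_eq omega0_opow_epsOmega OmegaO_lt_epsOmega (OmegaTow_lt_epsOmega n)

theorem OmegaTow_lt_succ : ∀ n, OmegaTow n < OmegaTow (n + 1)
  | 0 => by simpa only [OmegaTow, opow_zero, opow_one] using one_lt_OmegaO
  | n + 1 => (opow_lt_opow_iff_right one_lt_OmegaO).2 (OmegaTow_lt_succ n)

theorem star_zero' : star (0 : Ordinal) = 0 := by
  rw [star.eq_def]; simp

theorem star_opow {a : Ordinal} (ha : a < OmegaO ^ a) : star (OmegaO ^ a) = max (star a) 1 := by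
  have hne : OmegaO ^ a ≠ 0 := (opow_pos a OmegaO_pos).ne'
  have hlog : log OmegaO (OmegaO ^ a) = a := log_opow one_lt_OmegaO a
  rw [star.eq_def, dif_neg hne, hlog, dif_pos ha, mod_self, div_self hne, star_zero', max_zero]

theorem star_OmegaTow : ∀ n, star (OmegaTow n) = 1
  | 0 => by
    simpa only [OmegaTow, opow_zero, star_zero', max_eq_right zero_le_one] using
      star_opow (a := 0) (by simp)
  | n + 1 => by
    rw [OmegaTow, star_opow (OmegaTow_lt_succ n), star_OmegaTow n, max_self]

section Collapse

variable {X : Set Ordinal} {ζ θ : Ordinal}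

theorem ThetaF_le (hθ : θ ∈ X) (hstar : star ζ < θ)
    (hbelow : ∀ ζ' < ζ, star ζ' < θ → ThetaF X ζ' < θ) : ThetaF X ζ ≤ θ := by
  rw [ThetaF]
  exact csInf_le' ⟨hθ, hstar, hbelow⟩

theorem star_lt_ThetaF (hθ : θ ∈ X) (hstar : star ζ < θ)
    (hbelow : ∀ ζ' < ζ, star ζ' < θ → ThetaF X ζ' < θ) : star ζ < ThetaF X ζ := by
  rw [ThetaF]
  exact (csInf_mem (s := {θ | θ ∈ X ∧ star ζ < θ ∧ ∀ ζ' < ζ, star ζ' < θ → ThetaF X ζ' < θ})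
    ⟨θ, hθ, hstar, hbelow⟩).2.1

theorem ThetaF_zero_pos (hθ : θ ∈ X) (hθ0 : 0 < θ) : 0 < ThetaF X 0 := by
  simpa only [star_zero'] using
    star_lt_ThetaF (ζ := 0) hθ (by rwa [star_zero']) fun _ h => (not_lt_zero h).elim

theorem exists_le_ThetaF_eq_of_le_ThetaF {ξ γ : Ordinal} (hξ : ξ ∈ X) (hγ : star γ < ξ)
    (hξγ : ξ ≤ ThetaF X γ) : ∃ ζ ≤ γ, ThetaF X ζ = ξ := by
  set T := {ζ | star ζ < ξ ∧ ξ ≤ ThetaF X ζ}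
  have hγT : γ ∈ T := ⟨hγ, hξγ⟩
  obtain ⟨hstar, hge⟩ : sInf T ∈ T := csInf_mem ⟨γ, hγT⟩
  have hbelow : ∀ ζ' < sInf T, star ζ' < ξ → ThetaF X ζ' < ξ := fun ζ' hlt hζ' =>
    not_le.1 fun hle => (csInf_le' (show ζ' ∈ T from ⟨hζ', hle⟩)).not_gt hlt
  exact ⟨sInf T, csInf_le' hγT, (ThetaF_le hξ hstar hbelow).antisymm hge⟩

end Collapse

theorem stmt6_general (X : Set Ordinal) (h0X : 0 ∉ X)
    (ξ : Ordinal) (h1 : ξ ∈ X) (h2 : ξ < ThetaEps X) :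
    ∃ ζ, ζ < epsOmega ∧ ThetaF X ζ = ξ := by
  obtain ⟨n, hn⟩ := Ordinal.lt_iSup_iff.1 h2
  have hξ0 : 0 < ξ := pos_iff_ne_zero.2 fun h => h0X (h ▸ h1)
  rcases le_or_gt ξ (ThetaF X 0) with hle | hlt
  · obtain ⟨ζ, hζ, hΘ⟩ := exists_le_ThetaF_eq_of_le_ThetaF h1 (by rwa [star_zero']) hle
    exact ⟨ζ, hζ.trans_lt (OmegaO_pos.trans OmegaO_lt_epsOmega), hΘ⟩
  · have hξ1 : star (OmegaTow n) < ξ := by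
      rw [star_OmegaTow]
      exact (Order.one_le_iff_pos.2 (ThetaF_zero_pos h1 hξ0)).trans_lt hlt
    obtain ⟨ζ, hζ, hΘ⟩ := exists_le_ThetaF_eq_of_le_ThetaF h1 hξ1 hn.le
    exact ⟨ζ, hζ.trans_lt (OmegaTow_lt_epsOmega n), hΘ⟩

/-- every element of `X` below `Θ_X(ε_{Ω+1})` is in the range of `Θ_X`. -/
theorem stmt6 (X : Set Ordinal) (hX : IsClubBelowOmega X) (h0X : 0 ∉ X)
    (ξ : Ordinal) (h1 : ξ ∈ X) (h2 : ξ < ThetaEps X) :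
    ∃ ζ, ζ < epsOmega ∧ ThetaF X ζ = ξ :=
  stmt6_general X h0X ξ h1 h2

end
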